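/- Let M be an n×n matrix with nonnegative real entries satisfying ∑_{i,j} M_{i,j} = v. Then the permanent of M is at most (v/n)^n. -/

import Mathlib

open Finset

/-! Expanding the product of the row sums of `M` gives the sum of `∏ i, M i (f i)` over all maps
`f : Fin n → Fin n`; the permanent keeps only the bijective `f`, so it is at most that product.
AM-GM then bounds the product of the `n` row sums by the `n`-th power of their mean `v / n`. -/

/-- The permanent of a matrix. -/
def permanent {n : ℕ} (M : Matrix (Fin n) (Fin n) ℝ) : ℝ :=
  ∑ σ : Equiv.Perm (Fin n), ∏ i, M i (σ i)

theorem Real.prod_le_arith_mean_pow_card {ι : Type*} (s : Finset ι) (z : ι → ℝ)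
    (hz : ∀ i ∈ s, 0 ≤ z i) : ∏ i ∈ s, z i ≤ ((∑ i ∈ s, z i) / #s) ^ #s := by
  rcases s.eq_empty_or_nonempty with rfl | hs
  · simp
  have hprod : 0 ≤ ∏ i ∈ s, z i := prod_nonneg hz
  have hgm : (∏ i ∈ s, z i) ^ ((#s : ℝ)⁻¹) ≤ (∑ i ∈ s, z i) / #s := by
    simpa using Real.geom_mean_le_arith_mean s (fun _ => 1) z (by simp) (by simpa using hs) hz
  calc ∏ i ∈ s, z i = ((∏ i ∈ s, z i) ^ ((#s : ℝ)⁻¹)) ^ #s :=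
        (Real.rpow_inv_natCast_pow hprod hs.card_pos.ne').symm
    _ ≤ ((∑ i ∈ s, z i) / #s) ^ #s := by gcongr

theorem permanent_le_prod_sum_row {n : ℕ} {M : Matrix (Fin n) (Fin n) ℝ} (hM : ∀ i j, 0 ≤ M i j) :
    permanent M ≤ ∏ i, ∑ j, M i j := by
  let toFun : Equiv.Perm (Fin n) ↪ (Fin n → Fin n) := ⟨_, Equiv.coe_fn_injective⟩
  calc permanent M = ∑ f ∈ univ.map toFun, ∏ i, M i (f i) :=
        (sum_map univ toFun fun f => ∏ i, M i (f i)).symm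
    _ ≤ ∑ f : Fin n → Fin n, ∏ i, M i (f i) :=
      sum_le_univ_sum_of_nonneg fun f => prod_nonneg fun i _ => hM i (f i)
    _ = ∏ i, ∑ j, M i j := (Fintype.prod_sum fun i j => M i j).symm

theorem permanent_upper_bound_general (n : ℕ) (v : ℝ)
    (M : Matrix (Fin n) (Fin n) ℝ) (hM : ∀ i j, 0 ≤ M i j)
    (hsum : ∑ i, ∑ j, M i j = v) :
    permanent M ≤ (v / n) ^ n := by
  calc permanent M ≤ ∏ i, ∑ j, M i j := permanent_le_prod_sum_row hM
    _ ≤ (v / n) ^ n := by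
      simpa [hsum] using Real.prod_le_arith_mean_pow_card univ (fun i => ∑ j, M i j)
        fun i _ => sum_nonneg fun j _ => hM i j

/-- If M is an n×n matrix with nonnegative entries whose total sum is v,
then perm(M) ≤ (v/n)^n. -/
theorem permanent_upper_bound (n : ℕ) (hn : 0 < n) (v : ℝ)
    (M : Matrix (Fin n) (Fin n) ℝ) (hM : ∀ i j, 0 ≤ M i j)
    (hsum : ∑ i, ∑ j, M i j = v) :
    permanent M ≤ (v / n) ^ n :=
  permanent_upper_bound_general n v M hM hsum
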